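/- (Uniform subluminal speed) Let {(x_i, v_i)}_{i=1}^N be a solution of the RCS model with bonding force on [0,τ). Then the speeds are uniformly bounded away from the speed of light: sup_{t ∈ [0,τ)} max_{1≤i≤N} |v_i(t)| < c. -/

import Mathlib

open scoped BigOperators ENNReal Topology
open Filter

noncomputable section

/-- Lorentz factor `Γ(v) = 1/√(1 - ‖v‖²/c²)`. -/
def lorentz {d : ℕ} (c : ℝ) (v : EuclideanSpace ℝ (Fin d)) : ℝ :=
  1 / Real.sqrt (1 - ‖v‖ ^ 2 / c ^ 2)

/-- `F(v) = Γ(v)(1 + Γ(v)/c²)`. -/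
def Fmap {d : ℕ} (c : ℝ) (v : EuclideanSpace ℝ (Fin d)) : ℝ :=
  lorentz c v * (1 + lorentz c v / c ^ 2)

/-- Momentum-like observable `ŵ(v) = F(v) v`. -/
def what {d : ℕ} (c : ℝ) (v : EuclideanSpace ℝ (Fin d)) : EuclideanSpace ℝ (Fin d) :=
  Fmap c v • v

/-- The time domain `[0, τ)` for `τ ∈ (0, ∞]`. -/
def dom (τ : ℝ≥0∞) : Set ℝ := {t : ℝ | 0 ≤ t ∧ ENNReal.ofReal t < τ}

/-- Right-hand side of the momentum equation of the (R)CS model with a bonding force: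
`(κ₀/N)∑_j φ(|x_i−x_j|)(v_j−v_i) + (1/2N)∑_{j≠i} [κ₁⟨v_j−v_i,(x_j−x_i)/|x_j−x_i|⟩ + κ₂(|x_i−x_j|−R_ij)]·(x_j−x_i)/|x_j−x_i|`. -/
def rcsForce {d : ℕ} (N : ℕ) (κ₀ κ₁ κ₂ : ℝ) (φ : ℝ → ℝ) (R : Fin N → Fin N → ℝ)
    (x v : Fin N → EuclideanSpace ℝ (Fin d)) (i : Fin N) : EuclideanSpace ℝ (Fin d) :=
  (κ₀ / (N : ℝ)) • ∑ j, φ ‖x i - x j‖ • (v j - v i)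
    + (1 / (2 * (N : ℝ))) • ∑ j ∈ Finset.univ.filter (fun j => j ≠ i),
        ((κ₁ * ((inner ℝ (v j - v i) (x j - x i) : ℝ) / ‖x j - x i‖)
            + κ₂ * (‖x i - x j‖ - R i j)) / ‖x j - x i‖) • (x j - x i)

/-- Solution of the relativistic Cucker–Smale model with bonding force and speed of light `c`
on `[0, τ)`: subluminal speeds, no collisions, `x_i' = v_i` and `w_i' = rcsForce` with
`w_i = ŵ(v_i)`. -/
def IsRCSSol {d : ℕ} (N : ℕ) (c κ₀ κ₁ κ₂ : ℝ) (φ : ℝ → ℝ) (R : Fin N → Fin N → ℝ)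
    (τ : ℝ≥0∞) (x v : Fin N → ℝ → EuclideanSpace ℝ (Fin d)) : Prop :=
  ∀ t ∈ dom τ,
    (∀ i, ‖v i t‖ < c) ∧
    (∀ i j, i ≠ j → x i t ≠ x j t) ∧
    (∀ i, HasDerivAt (x i) (v i t) t) ∧
    (∀ i, HasDerivAt (fun s => what c (v i s))
        (rcsForce N κ₀ κ₁ κ₂ φ R (fun k => x k t) (fun k => v k t) i) t)

/-- Relativistic kinetic energy `∑_i [c²(Γ_i − 1) + Γ_i² − log Γ_i]`. -/
def kinE {d : ℕ} (c : ℝ) {N : ℕ} (v : Fin N → EuclideanSpace ℝ (Fin d)) : ℝ :=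
  ∑ i, (c ^ 2 * (lorentz c (v i) - 1) + (lorentz c (v i) ^ 2 - Real.log (lorentz c (v i))))

/-- Potential energy `(κ₂/8N) ∑_{i≠j} (|x_i − x_j| − R_ij)²`. -/
def potE {d : ℕ} {N : ℕ} (κ₂ : ℝ) (R : Fin N → Fin N → ℝ)
    (x : Fin N → EuclideanSpace ℝ (Fin d)) : ℝ :=
  κ₂ / (8 * (N : ℝ)) * ∑ i, ∑ j ∈ Finset.univ.filter (fun j => j ≠ i), (‖x i - x j‖ - R i j) ^ 2

/-- Total relativistic energy. -/
def totE {d : ℕ} (c : ℝ) {N : ℕ} (κ₂ : ℝ) (R : Fin N → Fin N → ℝ)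
    (x v : Fin N → EuclideanSpace ℝ (Fin d)) : ℝ :=
  kinE c v + potE κ₂ R x


namespace RCSAux

def psi (c γ : ℝ) : ℝ := c ^ 2 * (γ ^ 2 - 1) * (1 + γ / c ^ 2) ^ 2
def dpsi (c γ : ℝ) : ℝ := 2 * (1 + γ / c ^ 2) * (c ^ 2 * γ + 2 * γ ^ 2 - 1)
def chi (c γ : ℝ) : ℝ := if 1 ≤ γ then psi c γ else dpsi c 1 * (γ - 1)

lemma psi_one (c : ℝ) : psi c 1 = 0 := by simp [psi]

lemma chi_eq_psi {c γ : ℝ} (h : 1 ≤ γ) : chi c γ = psi c γ := if_pos h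

lemma hasDerivAt_psi (c : ℝ) (hc : c ≠ 0) (γ : ℝ) : HasDerivAt (psi c) (dpsi c γ) γ := by
  have h1 : HasDerivAt (fun γ : ℝ => c ^ 2 * (γ ^ 2 - 1)) (c ^ 2 * (2 * γ)) γ := by
    simpa using ((hasDerivAt_pow 2 γ).sub_const 1).const_mul (c ^ 2)
  have h2 : HasDerivAt (fun γ : ℝ => (1 + γ / c ^ 2) ^ 2)
      ((2 : ℕ) * (1 + γ / c ^ 2) ^ 1 * (1 / c ^ 2)) γ := by
    have : HasDerivAt (fun γ : ℝ => 1 + γ / c ^ 2) (1 / c ^ 2) γ := by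
      simpa using ((hasDerivAt_id γ).div_const (c ^ 2)).const_add 1
    exact this.pow 2
  have h := h1.mul h2
  refine h.congr_deriv ?_
  unfold dpsi
  field_simp
  ring

lemma dpsi_pos {c γ : ℝ} (hc : 0 < c) (hγ : 1 ≤ γ) : 0 < dpsi c γ := by
  have hc2 : (0:ℝ) < c ^ 2 := by positivity
  have h1 : 0 < 1 + γ / c ^ 2 := by
    have : 0 < γ / c ^ 2 := div_pos (by linarith) hc2
    linarith
  have h2 : 0 < c ^ 2 * γ + 2 * γ ^ 2 - 1 := by nlinarith
  unfold dpsi; nlinarith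

lemma hasDerivAt_chi {c γ : ℝ} (hc : 0 < c) (hγ : 1 ≤ γ) :
    HasDerivAt (chi c) (dpsi c γ) γ := by
  rcases lt_or_eq_of_le hγ with h1 | h1
  · have hev : ∀ᶠ y in 𝓝 γ, chi c y = psi c y := by
      filter_upwards [eventually_gt_nhds h1] with y hy
      exact chi_eq_psi hy.le
    exact (hasDerivAt_psi c hc.ne' γ).congr_of_eventuallyEq (by filter_upwards [hev] with y hy using hy)
  · subst h1
    have hlin : HasDerivAt (fun y : ℝ => dpsi c 1 * (y - 1)) (dpsi c 1) (1:ℝ) := by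
      simpa using ((hasDerivAt_id (1:ℝ)).sub_const 1).const_mul (dpsi c 1)
    have hIci : HasDerivWithinAt (chi c) (dpsi c 1) (Set.Ici 1) 1 := by
      refine ((hasDerivAt_psi c hc.ne' 1).hasDerivWithinAt).congr ?_ ?_
      · intro y hy; exact chi_eq_psi hy
      · exact chi_eq_psi le_rfl
    have hIic : HasDerivWithinAt (chi c) (dpsi c 1) (Set.Iic 1) 1 := by
      refine (hlin.hasDerivWithinAt).congr ?_ ?_
      · intro y hy
        rcases lt_or_eq_of_le (Set.mem_Iic.mp hy) with h | h
        · simp [chi, not_le.mpr h]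
        · subst h; simp [chi, psi_one]
      · simp [chi, psi_one]
    have := hIic.union hIci
    rw [Set.Iic_union_Ici] at this
    exact hasDerivWithinAt_univ.mp this


lemma strictMonoOn_psi {c : ℝ} (hc : 0 < c) : StrictMonoOn (psi c) (Set.Ici 1) := by
  refine strictMonoOn_of_deriv_pos (convex_Ici 1) ?_ ?_
  · have : Continuous (psi c) := by unfold psi; fun_prop
    exact this.continuousOn
  · intro γ hγ
    rw [interior_Ici] at hγ
    rw [(hasDerivAt_psi c hc.ne' γ).deriv]
    exact dpsi_pos hc (le_of_lt hγ)

lemma strictMono_chi {c : ℝ} (hc : 0 < c) : StrictMono (chi c) := by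
  have hlin : StrictMono (fun y : ℝ => dpsi c 1 * (y - 1)) := by
    have h := dpsi_pos hc le_rfl
    intro a b hab
    dsimp only
    nlinarith
  have hIic : ∀ y < 1, chi c y = dpsi c 1 * (y - 1) := fun y hy => if_neg (not_le.mpr hy)
  intro a b hab
  rcases le_or_gt 1 a with ha | ha
  · rw [chi_eq_psi ha, chi_eq_psi (ha.trans hab.le)]
    exact strictMonoOn_psi hc ha (Set.mem_Ici.mpr (ha.trans hab.le)) hab
  · rcases le_or_gt 1 b with hb | hb
    · have h1 : chi c a < 0 := by
        rw [hIic a ha]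
        nlinarith [dpsi_pos hc (le_refl 1)]
      have h2 : (0:ℝ) ≤ chi c b := by
        rw [chi_eq_psi hb, ← psi_one c]
        rcases eq_or_lt_of_le hb with h | h
        · rw [← h]
        · exact (strictMonoOn_psi hc (Set.mem_Ici.mpr le_rfl) (Set.mem_Ici.mpr hb) h).le
      linarith
    · rw [hIic a ha, hIic b hb]
      exact hlin hab

lemma continuous_chi (c : ℝ) : Continuous (chi c) := by
  have h1 : Continuous (psi c) := by unfold psi; fun_prop
  have h2 : Continuous (fun y : ℝ => dpsi c 1 * (y - 1)) := by fun_prop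
  have : Continuous (fun γ : ℝ => if (1:ℝ) ≤ γ then psi c γ else dpsi c 1 * (γ - 1)) := by
    apply Continuous.if_le h1 h2 continuous_const continuous_id
    intro γ hγ
    simp only [id] at hγ
    rw [← hγ]
    simp [psi_one]
  exact this

lemma surjective_chi {c : ℝ} (hc : 0 < c) : Function.Surjective (chi c) := by
  refine (continuous_chi c).surjective ?_ ?_
  · -- atTop
    have h : Tendsto (fun γ : ℝ => c ^ 2 * (γ - 1)) atTop atTop := by
      apply Tendsto.const_mul_atTop (by positivity)
      exact tendsto_atTop_add_const_right _ _ tendsto_id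
    refine tendsto_atTop_mono' _ ?_ h
    filter_upwards [eventually_ge_atTop (1:ℝ)] with γ hγ
    rw [chi_eq_psi hγ]
    unfold psi
    have h1 : (1:ℝ) ≤ (1 + γ / c ^ 2) ^ 2 := by
      have : (0:ℝ) ≤ γ / c ^ 2 := by positivity
      nlinarith
    have e1 : c ^ 2 * (γ - 1) ≤ c ^ 2 * (γ ^ 2 - 1) := by nlinarith [sq_nonneg c, sq_nonneg (γ - 1), sq_nonneg (c * (γ - 1))]
    have e2 : c ^ 2 * (γ ^ 2 - 1) * 1 ≤ c ^ 2 * (γ ^ 2 - 1) * (1 + γ / c ^ 2) ^ 2 := by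
      apply mul_le_mul_of_nonneg_left h1
      nlinarith
    linarith
  · -- atBot
    have h : Tendsto (fun γ : ℝ => dpsi c 1 * (γ - 1)) atBot atBot := by
      apply Tendsto.const_mul_atBot (dpsi_pos hc le_rfl)
      exact tendsto_atBot_add_const_right _ _ tendsto_id
    refine h.congr' ?_
    filter_upwards [eventually_lt_atBot (1:ℝ)] with γ hγ
    exact (if_neg (not_le.mpr hγ)).symm

lemma exists_ginv {c : ℝ} (hc : 0 < c) :
    ∃ g : ℝ → ℝ, Continuous g ∧ (∀ y, chi c (g y) = y) ∧ (∀ γ, g (chi c γ) = γ) := by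
  let iso := StrictMono.orderIsoOfSurjective (chi c) (strictMono_chi hc) (surjective_chi hc)
  have hcoe : (iso : ℝ → ℝ) = chi c := StrictMono.coe_orderIsoOfSurjective _ _ _
  refine ⟨iso.symm, iso.symm.continuous, ?_, ?_⟩
  · intro y
    have h := iso.apply_symm_apply y
    rw [show iso (iso.symm y) = chi c (iso.symm y) from congrFun hcoe _] at h
    exact h
  · intro γ
    have h := iso.symm_apply_apply γ
    rw [show iso γ = chi c γ from congrFun hcoe _] at h
    exact h

lemma hasDerivAt_ginv {c : ℝ} (hc : 0 < c) {g : ℝ → ℝ} (hgc : Continuous g)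
    (hfg : ∀ y, chi c (g y) = y) (hgf : ∀ γ, g (chi c γ) = γ)
    {γ : ℝ} (hγ : 1 ≤ γ) :
    HasDerivAt g (dpsi c γ)⁻¹ (chi c γ) := by
  refine HasDerivAt.of_local_left_inverse (f := chi c) hgc.continuousAt ?_ (dpsi_pos hc hγ).ne' (Eventually.of_forall hfg)
  rw [hgf γ]; exact hasDerivAt_chi hc hγ


section Lorentz

variable {d : ℕ} {c : ℝ} {v : EuclideanSpace ℝ (Fin d)}

lemma one_sub_pos (hc : 0 < c) (hv : ‖v‖ < c) : 0 < 1 - ‖v‖ ^ 2 / c ^ 2 := by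
  have h : ‖v‖ ^ 2 < c ^ 2 := by
    have := norm_nonneg v
    nlinarith
  have hc2 : (0:ℝ) < c ^ 2 := by positivity
  rw [sub_pos, div_lt_one hc2]
  exact h

lemma lorentz_ge_one (hc : 0 < c) (hv : ‖v‖ < c) : 1 ≤ lorentz c v := by
  have hs := one_sub_pos hc hv
  have h1 : 1 - ‖v‖ ^ 2 / c ^ 2 ≤ 1 := by
    have : (0:ℝ) ≤ ‖v‖ ^ 2 / c ^ 2 := by positivity
    linarith
  have h2 : Real.sqrt (1 - ‖v‖ ^ 2 / c ^ 2) ≤ 1 := by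
    have := Real.sqrt_le_sqrt h1
    rwa [Real.sqrt_one] at this
  have h3 : 0 < Real.sqrt (1 - ‖v‖ ^ 2 / c ^ 2) := Real.sqrt_pos.mpr hs
  rw [lorentz]
  rw [le_div_iff₀ h3]
  linarith

lemma lorentz_pos (hc : 0 < c) (hv : ‖v‖ < c) : 0 < lorentz c v :=
  lt_of_lt_of_le one_pos (lorentz_ge_one hc hv)

lemma lorentz_sq (hc : 0 < c) (hv : ‖v‖ < c) :
    (lorentz c v) ^ 2 = 1 / (1 - ‖v‖ ^ 2 / c ^ 2) := by
  have hs := one_sub_pos hc hv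
  rw [lorentz, div_pow, one_pow, Real.sq_sqrt hs.le]

lemma psi_lorentz (hc : 0 < c) (hv : ‖v‖ < c) :
    psi c (lorentz c v) = ‖what c v‖ ^ 2 := by
  have hs := one_sub_pos hc hv
  have hγ2 := lorentz_sq hc hv
  have hγ2' : (lorentz c v) ^ 2 * (1 - ‖v‖ ^ 2 / c ^ 2) = 1 := by
    have hne : c ^ 2 - ‖v‖ ^ 2 ≠ 0 := by
      have : ‖v‖ ^ 2 < c ^ 2 := by nlinarith [norm_nonneg v]
      linarith
    rw [hγ2]; field_simp
  have hc2 : (c:ℝ) ^ 2 ≠ 0 := by positivity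
  have hkey : c ^ 2 * ((lorentz c v) ^ 2 - 1) = (lorentz c v) ^ 2 * ‖v‖ ^ 2 := by
    have h := congrArg (fun z => c ^ 2 * z) hγ2'
    field_simp at h
    nlinarith [h]
  have hnorm : ‖what c v‖ ^ 2 = (Fmap c v) ^ 2 * ‖v‖ ^ 2 := by
    rw [what, norm_smul, Real.norm_eq_abs, mul_pow, sq_abs]
  rw [hnorm, Fmap, psi]
  nlinarith [hkey]

lemma norm_sq_le_of_lorentz_le (hc : 0 < c) (hv : ‖v‖ < c) {Γ : ℝ}
    (hΓ : lorentz c v ≤ Γ) : ‖v‖ ^ 2 ≤ c ^ 2 * (1 - (1 / Γ) ^ 2) := by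
  have hs := one_sub_pos hc hv
  have hγ1 := lorentz_ge_one hc hv
  have hγ2 := lorentz_sq hc hv
  have hΓ1 : (1:ℝ) ≤ Γ := le_trans hγ1 hΓ
  have h1 : ‖v‖ ^ 2 = c ^ 2 * (1 - (1 / lorentz c v) ^ 2) := by
    have hγ0 : lorentz c v ≠ 0 := by linarith
    have : (1 / lorentz c v) ^ 2 = 1 - ‖v‖ ^ 2 / c ^ 2 := by
      rw [div_pow, one_pow, hγ2]
      field_simp
    rw [this]
    field_simp
    ring
  rw [h1]
  have h2 : (1 / Γ) ^ 2 ≤ (1 / lorentz c v) ^ 2 := by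
    have hγ0 : 0 < lorentz c v := by linarith
    have hΓ0 : 0 < Γ := by linarith
    rw [div_pow, div_pow, one_pow]
    apply div_le_div_of_nonneg_left one_pos.le (by positivity)
    nlinarith
  nlinarith [sq_nonneg c]

end Lorentz

section NormDeriv

lemma hasDerivAt_norm_comp {d : ℕ} {y : ℝ → EuclideanSpace ℝ (Fin d)}
    {y' : EuclideanSpace ℝ (Fin d)} {t : ℝ} (h : HasDerivAt y y' t) (hy : y t ≠ 0) :
    HasDerivAt (fun s => ‖y s‖) ((inner ℝ (y t) y' : ℝ) / ‖y t‖) t := by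
  have hin : HasDerivAt (fun s => (inner ℝ (y s) (y s) : ℝ))
      ((inner ℝ (y t) y' : ℝ) + (inner ℝ y' (y t) : ℝ)) t := h.inner ℝ h
  have hpos : (0:ℝ) < (inner ℝ (y t) (y t) : ℝ) := by
    rw [real_inner_self_eq_norm_sq]
    have : ‖y t‖ ≠ 0 := norm_ne_zero_iff.mpr hy
    positivity
  have hsq : HasDerivAt Real.sqrt (1 / (2 * Real.sqrt (inner ℝ (y t) (y t) : ℝ)))
      ((inner ℝ (y t) (y t) : ℝ)) := Real.hasDerivAt_sqrt hpos.ne'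
  have hcomp := hsq.comp t hin
  simp only [Function.comp_def] at hcomp
  have hfun : (fun s => Real.sqrt ((inner ℝ (y s) (y s) : ℝ))) = fun s => ‖y s‖ := by
    funext s
    rw [real_inner_self_eq_norm_sq, Real.sqrt_sq (norm_nonneg _)]
  rw [hfun] at hcomp
  refine hcomp.congr_deriv ?_
  have hn : Real.sqrt ((inner ℝ (y t) (y t) : ℝ)) = ‖y t‖ := by
    rw [real_inner_self_eq_norm_sq, Real.sqrt_sq (norm_nonneg _)]
  rw [hn, real_inner_comm y' (y t)]
  have h0 : ‖y t‖ ≠ 0 := norm_ne_zero_iff.mpr hy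
  field_simp
  ring

end NormDeriv

section DoubleSum

lemma double_sum_nonpos {N : ℕ} {f : Fin N → Fin N → ℝ}
    (h : ∀ i j, f i j + f j i ≤ 0) : ∑ i, ∑ j, f i j ≤ 0 := by
  have e1 : ∑ i, ∑ j, f j i = ∑ i, ∑ j, f i j := Finset.sum_comm
  have e2 : ∑ i, ∑ j, (f i j + f j i) = (∑ i, ∑ j, f i j) + ∑ i, ∑ j, f j i := by
    simp [Finset.sum_add_distrib]
  have h3 : ∑ i, ∑ j, (f i j + f j i) ≤ 0 :=
    Finset.sum_nonpos fun i _ => Finset.sum_nonpos fun j _ => h i j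
  linarith

end DoubleSum

section Scalar

lemma scalar_ident {c γ : ℝ} (hc : 0 < c) (hγ : 1 ≤ γ) :
    (c ^ 2 + (2 * γ - γ⁻¹)) * (2 * (γ * (1 + γ / c ^ 2))) = dpsi c γ := by
  have hγ0 : γ ≠ 0 := by linarith
  have hc0 : c ≠ 0 := hc.ne'
  unfold dpsi
  field_simp
  ring

lemma scalar_cancel {c γ A : ℝ} (hc : 0 < c) (hγ : 1 ≤ γ) :
    (c ^ 2 + (2 * γ - γ⁻¹)) * ((dpsi c γ)⁻¹ * (γ * (1 + γ / c ^ 2) * A + γ * (1 + γ / c ^ 2) * A)) = A := by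
  have h1 : (c ^ 2 + (2 * γ - γ⁻¹)) * ((dpsi c γ)⁻¹ * (γ * (1 + γ / c ^ 2) * A + γ * (1 + γ / c ^ 2) * A))
      = ((c ^ 2 + (2 * γ - γ⁻¹)) * (2 * (γ * (1 + γ / c ^ 2)))) * (dpsi c γ)⁻¹ * A := by ring
  rw [h1, scalar_ident hc hγ, mul_inv_cancel₀ (dpsi_pos hc hγ).ne']
  ring

lemma hasDerivAt_Gout (c : ℝ) (γ : ℝ) (hγ : γ ≠ 0) :
    HasDerivAt (fun y : ℝ => c ^ 2 * (y - 1) + (y ^ 2 - Real.log y))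
      (c ^ 2 + (2 * γ - γ⁻¹)) γ := by
  have h1 : HasDerivAt (fun y : ℝ => c ^ 2 * (y - 1)) (c ^ 2) γ := by
    simpa using ((hasDerivAt_id γ).sub_const 1).const_mul (c ^ 2)
  have h2 : HasDerivAt (fun y : ℝ => y ^ 2) (2 * γ) γ := by
    simpa using hasDerivAt_pow 2 γ
  have h3 := Real.hasDerivAt_log hγ
  exact h1.add (h2.sub h3)

lemma pair_nonpos {κ₀ κ₁ κ₂ Nr φr r Rij P1 P2 A1 S : ℝ}
    (hκ₀ : 0 ≤ κ₀) (hκ₁ : 0 ≤ κ₁) (hN : 0 < Nr) (hφ : 0 ≤ φr) (hr : 0 < r) (hS : 0 ≤ S) :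
    κ₀ / Nr * (φr * A1)
      + 1 / (2 * Nr) * ((κ₁ * ((P2 - P1) / r) + κ₂ * (r - Rij)) / r * P1)
      + κ₂ / (8 * Nr) * (2 * (r - Rij) * ((P2 - P1) / r))
      + (κ₀ / Nr * (φr * (-S - A1))
      + 1 / (2 * Nr) * ((κ₁ * ((P2 - P1) / r) + κ₂ * (r - Rij)) / r * (-P2))
      + κ₂ / (8 * Nr) * (2 * (r - Rij) * ((P2 - P1) / r))) ≤ 0 := by
  have key : κ₀ / Nr * (φr * A1)
      + 1 / (2 * Nr) * ((κ₁ * ((P2 - P1) / r) + κ₂ * (r - Rij)) / r * P1)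
      + κ₂ / (8 * Nr) * (2 * (r - Rij) * ((P2 - P1) / r))
      + (κ₀ / Nr * (φr * (-S - A1))
      + 1 / (2 * Nr) * ((κ₁ * ((P2 - P1) / r) + κ₂ * (r - Rij)) / r * (-P2))
      + κ₂ / (8 * Nr) * (2 * (r - Rij) * ((P2 - P1) / r)))
      = -(κ₀ / Nr * (φr * S)) - κ₁ * (P2 - P1) ^ 2 / (2 * Nr * r ^ 2) := by
    field_simp
    ring
  rw [key]
  have h1 : 0 ≤ κ₀ / Nr * (φr * S) := by positivity
  have h2 : 0 ≤ κ₁ * (P2 - P1) ^ 2 / (2 * Nr * r ^ 2) := by positivity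
  linarith

end Scalar

end RCSAux


open RCSAux in
set_option maxHeartbeats 2000000 in
/-- Uniform subluminal speed: along any solution of the RCS model with bonding force on
`[0, τ)`, the speeds stay uniformly bounded away from the speed of light. -/
theorem uniform_subluminal_speed
    (d N : ℕ) (hd : 1 ≤ d) (hN : 2 ≤ N)
    (c κ₀ κ₁ κ₂ : ℝ) (hc : 0 < c) (hκ₀ : 0 ≤ κ₀) (hκ₁ : 0 ≤ κ₁) (hκ₂ : 0 ≤ κ₂)
    (φ : ℝ → ℝ) (φM : ℝ) (hφ : LocallyLipschitz φ)
    (hφ0 : ∀ r, 0 ≤ φ r) (hφM : ∀ r, φ r ≤ φM)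
    (R : Fin N → Fin N → ℝ) (hR0 : ∀ i, R i i = 0)
    (hRsym : ∀ i j, R i j = R j i) (hRnn : ∀ i j, 0 ≤ R i j)
    (τ : ℝ≥0∞) (hτ : 0 < τ)
    (x v : Fin N → ℝ → EuclideanSpace ℝ (Fin d))
    (hsol : IsRCSSol N c κ₀ κ₁ κ₂ φ R τ x v) :
    ∃ b : ℝ, b < c ∧ ∀ t ∈ dom τ, ∀ i, ‖v i t‖ ≤ b := by
  classical
  obtain ⟨g, hgc, hfg, hgf⟩ := RCSAux.exists_ginv hc
  have hN0 : (0:ℝ) < (N:ℝ) := by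
    have : 0 < N := by omega
    exact_mod_cast this
  -- abbreviations
  set Ekin : ℝ → ℝ := fun s => ∑ i, (c ^ 2 * (g (‖what c (v i s)‖ ^ 2) - 1) +
      ((g (‖what c (v i s)‖ ^ 2)) ^ 2 - Real.log (g (‖what c (v i s)‖ ^ 2)))) with hEkin_def
  set Epot : ℝ → ℝ := fun s => potE κ₂ R (fun k => x k s) with hEpot_def
  set Etot : ℝ → ℝ := fun s => Ekin s + Epot s with hEtot_def
  have hdom0 : (0:ℝ) ∈ dom τ := ⟨le_rfl, by simpa using hτ⟩
  -- the value of g on solutions is the Lorentz factor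
  have hgval : ∀ t ∈ dom τ, ∀ i, g (‖what c (v i t)‖ ^ 2) = lorentz c (v i t) := by
    intro t ht i
    have hsp := (hsol t ht).1 i
    have hγ1 : 1 ≤ lorentz c (v i t) := lorentz_ge_one hc hsp
    have hchi : chi c (lorentz c (v i t)) = ‖what c (v i t)‖ ^ 2 := by
      rw [chi_eq_psi hγ1, psi_lorentz hc hsp]
    rw [← hchi, hgf]
  -- energy dissipation
  have hderiv : ∀ t ∈ dom τ, ∃ D : ℝ, HasDerivAt Etot D t ∧ D ≤ 0 := by
    intro t ht
    obtain ⟨hsp, hcol, hdx, hdw⟩ := hsol t ht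
    -- kinetic part: each summand has derivative ⟪F_i, v_i⟫
    have hkin : ∀ i : Fin N, HasDerivAt
        (fun s => c ^ 2 * (g (‖what c (v i s)‖ ^ 2) - 1) +
          ((g (‖what c (v i s)‖ ^ 2)) ^ 2 - Real.log (g (‖what c (v i s)‖ ^ 2))))
        ((inner ℝ (rcsForce N κ₀ κ₁ κ₂ φ R (fun k => x k t) (fun k => v k t) i) (v i t) : ℝ)) t := by
      intro i
      have hγ1 : 1 ≤ lorentz c (v i t) := lorentz_ge_one hc (hsp i)
      have hγ0 : lorentz c (v i t) ≠ 0 := by linarith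
      have hchi : chi c (lorentz c (v i t)) = ‖what c (v i t)‖ ^ 2 := by
        rw [chi_eq_psi hγ1, psi_lorentz hc (hsp i)]
      have hg0 : g (‖what c (v i t)‖ ^ 2) = lorentz c (v i t) := by rw [← hchi, hgf]
      have h1 := hdw i
      have h2 : HasDerivAt (fun s => ‖what c (v i s)‖ ^ 2)
          ((inner ℝ (what c (v i t)) (rcsForce N κ₀ κ₁ κ₂ φ R (fun k => x k t) (fun k => v k t) i) : ℝ)
            + (inner ℝ (rcsForce N κ₀ κ₁ κ₂ φ R (fun k => x k t) (fun k => v k t) i) (what c (v i t)) : ℝ)) t := by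
        have h2' := HasDerivAt.inner (𝕜 := ℝ) h1 h1
        have hfun : (fun s => (inner ℝ (what c (v i s)) (what c (v i s)) : ℝ)) =
            (fun s => ‖what c (v i s)‖ ^ 2) := by
          funext s
          exact real_inner_self_eq_norm_sq _
        rw [← hfun]
        exact h2'
      have h3 : HasDerivAt g (dpsi c (lorentz c (v i t)))⁻¹ (‖what c (v i t)‖ ^ 2) := by
        rw [← hchi]
        exact hasDerivAt_ginv hc hgc hfg hgf hγ1
      have h4 := h3.comp t h2
      have h5 : HasDerivAt (fun y : ℝ => c ^ 2 * (y - 1) + (y ^ 2 - Real.log y))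
          (c ^ 2 + (2 * lorentz c (v i t) - (lorentz c (v i t))⁻¹)) (g (‖what c (v i t)‖ ^ 2)) := by
        rw [hg0]
        exact hasDerivAt_Gout c _ hγ0
      have h6 := h5.comp t h4
      simp only [Function.comp_def] at h6
      refine h6.congr_deriv ?_
      rw [show what c (v i t) = Fmap c (v i t) • (v i t) from rfl,
        real_inner_smul_left, real_inner_smul_right,
        real_inner_comm (v i t) (rcsForce N κ₀ κ₁ κ₂ φ R (fun k => x k t) (fun k => v k t) i)]
      rw [show Fmap c (v i t) = lorentz c (v i t) * (1 + lorentz c (v i t) / c ^ 2) from rfl]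
      exact scalar_cancel hc hγ1
    have hEkind : HasDerivAt Ekin
        (∑ i, (inner ℝ (rcsForce N κ₀ κ₁ κ₂ φ R (fun k => x k t) (fun k => v k t) i) (v i t) : ℝ)) t := by
      rw [hEkin_def]
      exact HasDerivAt.fun_sum fun i _ => hkin i
    -- potential part
    have hpotd : HasDerivAt Epot
        (κ₂ / (8 * (N:ℝ)) * ∑ i, ∑ j ∈ Finset.univ.filter (fun j => j ≠ i),
          ((2:ℝ) * (‖x i t - x j t‖ - R i j) *
            ((inner ℝ (x i t - x j t) (v i t - v j t) : ℝ) / ‖x i t - x j t‖))) t := by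
      rw [hEpot_def]
      simp only [potE]
      apply HasDerivAt.const_mul
      apply HasDerivAt.fun_sum
      intro i _
      apply HasDerivAt.fun_sum
      intro j hj
      have hij : j ≠ i := by simpa using (Finset.mem_filter.mp hj).2
      have hxne : x i t - x j t ≠ 0 := sub_ne_zero.mpr (hcol i j (Ne.symm hij))
      have hdiff : HasDerivAt (fun s => x i s - x j s) (v i t - v j t) t := (hdx i).sub (hdx j)
      have hn := hasDerivAt_norm_comp hdiff hxne
      have h2 := (hn.sub_const (R i j)).pow 2
      refine h2.congr_deriv ?_
      push_cast
      ring
    refine ⟨_, hEkind.add hpotd, ?_⟩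
    -- the dissipation inequality
    set f : Fin N → Fin N → ℝ := fun i j =>
      κ₀ / (N:ℝ) * (φ ‖x i t - x j t‖ * (inner ℝ (v j t - v i t) (v i t) : ℝ))
      + 1 / (2 * (N:ℝ)) * (((κ₁ * ((inner ℝ (v j t - v i t) (x j t - x i t) : ℝ) / ‖x j t - x i t‖)
          + κ₂ * (‖x i t - x j t‖ - R i j)) / ‖x j t - x i t‖) * (inner ℝ (x j t - x i t) (v i t) : ℝ))
      + κ₂ / (8 * (N:ℝ)) * ((2:ℝ) * (‖x i t - x j t‖ - R i j) *
          ((inner ℝ (x i t - x j t) (v i t - v j t) : ℝ) / ‖x i t - x j t‖)) with hfdef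
    have hforce : ∀ i, (inner ℝ (rcsForce N κ₀ κ₁ κ₂ φ R (fun k => x k t) (fun k => v k t) i) (v i t) : ℝ)
        = κ₀ / (N:ℝ) * ∑ j, φ ‖x i t - x j t‖ * (inner ℝ (v j t - v i t) (v i t) : ℝ)
          + 1 / (2 * (N:ℝ)) * ∑ j ∈ Finset.univ.filter (fun j => j ≠ i),
              ((κ₁ * ((inner ℝ (v j t - v i t) (x j t - x i t) : ℝ) / ‖x j t - x i t‖)
                + κ₂ * (‖x i t - x j t‖ - R i j)) / ‖x j t - x i t‖) * (inner ℝ (x j t - x i t) (v i t) : ℝ) := by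
      intro i
      simp only [rcsForce, inner_add_left, real_inner_smul_left, sum_inner]
    have hmid : ∀ i, ∑ j ∈ Finset.univ.filter (fun j => j ≠ i),
          ((κ₁ * ((inner ℝ (v j t - v i t) (x j t - x i t) : ℝ) / ‖x j t - x i t‖)
            + κ₂ * (‖x i t - x j t‖ - R i j)) / ‖x j t - x i t‖) * (inner ℝ (x j t - x i t) (v i t) : ℝ)
        = ∑ j, ((κ₁ * ((inner ℝ (v j t - v i t) (x j t - x i t) : ℝ) / ‖x j t - x i t‖)
            + κ₂ * (‖x i t - x j t‖ - R i j)) / ‖x j t - x i t‖) * (inner ℝ (x j t - x i t) (v i t) : ℝ) := by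
      intro i
      rw [Finset.sum_filter]
      apply Finset.sum_congr rfl
      intro j _
      by_cases h : j = i
      · subst h
        simp
      · rw [if_pos h]
    have hPmid : ∀ i, ∑ j ∈ Finset.univ.filter (fun j => j ≠ i),
          ((2:ℝ) * (‖x i t - x j t‖ - R i j) *
            ((inner ℝ (x i t - x j t) (v i t - v j t) : ℝ) / ‖x i t - x j t‖))
        = ∑ j, ((2:ℝ) * (‖x i t - x j t‖ - R i j) *
            ((inner ℝ (x i t - x j t) (v i t - v j t) : ℝ) / ‖x i t - x j t‖)) := by
      intro i
      rw [Finset.sum_filter]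
      apply Finset.sum_congr rfl
      intro j _
      by_cases h : j = i
      · subst h
        simp
      · rw [if_pos h]
    have htotal : (∑ i, (inner ℝ (rcsForce N κ₀ κ₁ κ₂ φ R (fun k => x k t) (fun k => v k t) i) (v i t) : ℝ))
        + κ₂ / (8 * (N:ℝ)) * ∑ i, ∑ j ∈ Finset.univ.filter (fun j => j ≠ i),
          ((2:ℝ) * (‖x i t - x j t‖ - R i j) *
            ((inner ℝ (x i t - x j t) (v i t - v j t) : ℝ) / ‖x i t - x j t‖))
        = ∑ i, ∑ j, f i j := by
      rw [Finset.mul_sum, ← Finset.sum_add_distrib]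
      apply Finset.sum_congr rfl
      intro i _
      rw [hforce i, hmid i, hPmid i, Finset.mul_sum, Finset.mul_sum, Finset.mul_sum,
        ← Finset.sum_add_distrib, ← Finset.sum_add_distrib]
    rw [htotal]
    apply double_sum_nonpos
    intro i j
    by_cases hij : i = j
    · subst hij
      simp [hfdef]
    · simp only [hfdef]
      have hxne : x j t ≠ x i t := hcol j i (Ne.symm hij)
      have hr : (0:ℝ) < ‖x j t - x i t‖ := by
        rw [norm_pos_iff]
        exact sub_ne_zero.mpr hxne
      have e0 : x i t - x j t = -(x j t - x i t) := (neg_sub _ _).symm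
      have ev : v i t - v j t = -(v j t - v i t) := (neg_sub _ _).symm
      have hnrev : ‖x i t - x j t‖ = ‖x j t - x i t‖ := norm_sub_rev _ _
      have e1 : (inner ℝ (v j t - v i t) (x j t - x i t) : ℝ)
          = (inner ℝ (x j t - x i t) (v j t) : ℝ) - (inner ℝ (x j t - x i t) (v i t) : ℝ) := by
        rw [real_inner_comm, inner_sub_right]
      have e2 : (inner ℝ (v i t - v j t) (x i t - x j t) : ℝ)
          = (inner ℝ (x j t - x i t) (v j t) : ℝ) - (inner ℝ (x j t - x i t) (v i t) : ℝ) := by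
        rw [e0, ev, inner_neg_neg, e1]
      have e3 : (inner ℝ (x i t - x j t) (v j t) : ℝ) = -(inner ℝ (x j t - x i t) (v j t) : ℝ) := by
        rw [e0, inner_neg_left]
      have e4 : (inner ℝ (x i t - x j t) (v i t - v j t) : ℝ)
          = (inner ℝ (x j t - x i t) (v j t) : ℝ) - (inner ℝ (x j t - x i t) (v i t) : ℝ) := by
        rw [e0, ev, inner_neg_neg, inner_sub_right]
      have e5 : (inner ℝ (x j t - x i t) (v j t - v i t) : ℝ)
          = (inner ℝ (x j t - x i t) (v j t) : ℝ) - (inner ℝ (x j t - x i t) (v i t) : ℝ) :=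
        inner_sub_right _ _ _
      have eA : (inner ℝ (v i t - v j t) (v j t) : ℝ)
          = -‖v j t - v i t‖ ^ 2 - (inner ℝ (v j t - v i t) (v i t) : ℝ) := by
        have h := real_inner_self_eq_norm_sq (v j t - v i t)
        have hcm : (inner ℝ (v i t) (v j t) : ℝ) = inner ℝ (v j t) (v i t) := real_inner_comm _ _
        simp only [inner_sub_left, inner_sub_right] at h ⊢
        linarith
      rw [hnrev, hRsym j i, e1, e2, e3, e4, e5, eA]
      exact pair_nonpos hκ₀ hκ₁ hN0 (hφ0 _) hr (by positivity)
  -- energy is non-increasing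
  have hmono : ∀ t ∈ dom τ, Etot t ≤ Etot 0 := by
    intro t ht
    rcases eq_or_lt_of_le ht.1 with h0 | h0
    · rw [← h0]
    · have hsub : Set.Icc (0:ℝ) t ⊆ dom τ := by
        intro s hs
        exact ⟨hs.1, lt_of_le_of_lt (ENNReal.ofReal_le_ofReal hs.2) ht.2⟩
      have hant : AntitoneOn Etot (Set.Icc 0 t) := by
        apply antitoneOn_of_deriv_nonpos (convex_Icc 0 t)
        · intro s hs
          obtain ⟨D, hD, _⟩ := hderiv s (hsub hs)
          exact hD.continuousAt.continuousWithinAt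
        · intro s hs
          rw [interior_Icc] at hs
          obtain ⟨D, hD, _⟩ := hderiv s (hsub ⟨hs.1.le, hs.2.le⟩)
          exact hD.differentiableAt.differentiableWithinAt
        · intro s hs
          rw [interior_Icc] at hs
          obtain ⟨D, hD, hD0⟩ := hderiv s (hsub ⟨hs.1.le, hs.2.le⟩)
          rw [hD.deriv]
          exact hD0
      exact hant (Set.left_mem_Icc.mpr h0.le) (Set.right_mem_Icc.mpr h0.le) h0.le
  -- nonnegativity facts
  have hterm : ∀ γ : ℝ, 1 ≤ γ → 0 ≤ γ ^ 2 - Real.log γ := by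
    intro γ h
    nlinarith [Real.log_le_sub_one_of_pos (show (0:ℝ) < γ by linarith)]
  have hEpot_nonneg : ∀ s, 0 ≤ Epot s := by
    intro s
    rw [hEpot_def]
    dsimp only
    unfold potE
    apply mul_nonneg (by positivity)
    apply Finset.sum_nonneg
    intro i _
    apply Finset.sum_nonneg
    intro j _
    positivity
  have hkin_term_nonneg : ∀ t ∈ dom τ, ∀ i,
      0 ≤ c ^ 2 * (g (‖what c (v i t)‖ ^ 2) - 1) +
        ((g (‖what c (v i t)‖ ^ 2)) ^ 2 - Real.log (g (‖what c (v i t)‖ ^ 2))) := by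
    intro t ht i
    rw [hgval t ht i]
    have hγ1 : 1 ≤ lorentz c (v i t) := lorentz_ge_one hc ((hsol t ht).1 i)
    have h1 := hterm _ hγ1
    nlinarith
  -- the bound
  set E0 : ℝ := Etot 0 with hE0_def
  have hE0_nonneg : 0 ≤ E0 := by
    rw [hE0_def, hEtot_def]
    dsimp only
    have h1 : 0 ≤ Ekin 0 := by
      rw [hEkin_def]
      exact Finset.sum_nonneg fun i _ => hkin_term_nonneg 0 hdom0 i
    have h2 := hEpot_nonneg 0
    -- Ekin is definitionally the sum above
    linarith
  set Γm : ℝ := 1 + E0 / c ^ 2 with hΓm_def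
  have hΓm1 : 1 ≤ Γm := by
    rw [hΓm_def]
    have : 0 ≤ E0 / c ^ 2 := by positivity
    linarith
  have hlor_le : ∀ t ∈ dom τ, ∀ i, lorentz c (v i t) ≤ Γm := by
    intro t ht i
    have hle1 : c ^ 2 * (lorentz c (v i t) - 1) ≤ Ekin t := by
      have h1 : c ^ 2 * (g (‖what c (v i t)‖ ^ 2) - 1) +
          ((g (‖what c (v i t)‖ ^ 2)) ^ 2 - Real.log (g (‖what c (v i t)‖ ^ 2))) ≤ Ekin t := by
        rw [hEkin_def]
        exact Finset.single_le_sum (fun j _ => hkin_term_nonneg t ht j) (Finset.mem_univ i)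
      have hγ1 : 1 ≤ lorentz c (v i t) := lorentz_ge_one hc ((hsol t ht).1 i)
      have h2 := hterm (lorentz c (v i t)) hγ1
      rw [hgval t ht i] at h1
      linarith
    have hle2 : Ekin t ≤ E0 := by
      have h1 := hmono t ht
      have h2 := hEpot_nonneg t
      rw [hEtot_def] at h1
      dsimp only at h1
      linarith
    have hc2 : (0:ℝ) < c ^ 2 := by positivity
    have h4 : c ^ 2 * (lorentz c (v i t) - 1) ≤ E0 := le_trans hle1 hle2
    have h3 : lorentz c (v i t) - 1 ≤ E0 / c ^ 2 := by
      rw [le_div_iff₀ hc2]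
      linarith
    rw [hΓm_def]
    linarith
  refine ⟨c * Real.sqrt (1 - (1 / Γm) ^ 2), ?_, ?_⟩
  · have harg0 : 0 ≤ 1 - (1 / Γm) ^ 2 := by
      have h1 : (1 / Γm) ≤ 1 := by
        rw [div_le_one (by linarith)]
        linarith
      have h2 : 0 < 1 / Γm := by positivity
      nlinarith
    have h3 : Real.sqrt (1 - (1 / Γm) ^ 2) < 1 := by
      have h4 : 1 - (1 / Γm) ^ 2 < 1 := by
        have : 0 < (1 / Γm) ^ 2 := by positivity
        linarith
      nlinarith [Real.sq_sqrt harg0, Real.sqrt_nonneg (1 - (1 / Γm) ^ 2)]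
    nlinarith [Real.sqrt_nonneg (1 - (1 / Γm) ^ 2)]
  · intro t ht i
    have harg0 : 0 ≤ 1 - (1 / Γm) ^ 2 := by
      have h1 : (1 / Γm) ≤ 1 := by
        rw [div_le_one (by linarith)]
        linarith
      have h2 : 0 < 1 / Γm := by positivity
      nlinarith
    have hb0 : 0 ≤ c * Real.sqrt (1 - (1 / Γm) ^ 2) := by positivity
    have hsq : ‖v i t‖ ^ 2 ≤ (c * Real.sqrt (1 - (1 / Γm) ^ 2)) ^ 2 := by
      have h1 := norm_sq_le_of_lorentz_le hc ((hsol t ht).1 i) (hlor_le t ht i)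
      have h2 : (c * Real.sqrt (1 - (1 / Γm) ^ 2)) ^ 2 = c ^ 2 * (1 - (1 / Γm) ^ 2) := by
        rw [mul_pow, Real.sq_sqrt harg0]
      rw [h2]
      exact h1
    nlinarith [norm_nonneg (v i t)]
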